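/- Let L be a lattice in F × F that is stable under O_F × O_F (i.e. (O_F × O_F)·L ⊆ L). Then the homothety classes adjacent to [L] having a representative stable under O_F × O_F are exactly the two distinct classes [(π,1)·L] and [(1,π)·L]. -/

import Mathlib

/-!
`F` is a nonarchimedean local field: a field complete with respect to a discrete valuation
(encoded by `Valued F ℤᵐ⁰` together with `CompleteSpace F` and the requirement that the
valuation ring is a discrete valuation ring) with finite residue field. We consider lattices
in the split quadratic algebra `F × F`.
-/

open scoped Multiplicative Pointwise WithZero

noncomputable section

variable (F : Type*) [Field F] [Valued F ℤᵐ⁰] [CompleteSpace F]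

/-- The valuation ring `O_F` of `F`. -/
noncomputable abbrev OF : ValuationSubring F := (Valued.v : Valuation F ℤᵐ⁰).valuationSubring

noncomputable instance : Algebra (OF F) (F × F) :=
  ((algebraMap F (F × F)).comp (algebraMap (OF F) F)).toAlgebra

/-- A lattice in `F × F`: a finitely generated `O_F`-submodule of `F × F` containing an
`F`-basis of `F × F` (equivalently, spanning `F × F` as an `F`-vector space). -/
def IsLattice (L : Submodule (OF F) (F × F)) : Prop :=
  L.FG ∧ Submodule.span F (L : Set (F × F)) = ⊤

/-- `L` is stable under `O_F × O_F` (componentwise multiplication). -/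
def Stable (L : Submodule (OF F) (F × F)) : Prop :=
  ∀ a b : OF F, ∀ x ∈ L, (((a : F), (b : F)) : F × F) * x ∈ L

/-- Two `O_F`-submodules of `F × F` are homothetic if they differ by (diagonal) scaling by an
element of `F^*`. -/
def Homothetic (L L' : Submodule (OF F) (F × F)) : Prop :=
  ∃ c : F, c ≠ 0 ∧ (L' : Set (F × F)) = c • (L : Set (F × F))

/-- The homothety classes of two lattices `L`, `L'` are adjacent (as vertices of the
Bruhat–Tits tree) if they are distinct and admit representatives `M`, `M'` with
`π·M ⊊ M' ⊊ M`. -/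
def Adjacent (π : OF F) (L L' : Submodule (OF F) (F × F)) : Prop :=
  ¬ Homothetic F L L' ∧
    ∃ M M' : Submodule (OF F) (F × F), Homothetic F L M ∧ Homothetic F L' M' ∧
      ((π : F)) • (M : Set (F × F)) ⊂ (M' : Set (F × F)) ∧
      (M' : Set (F × F)) ⊂ (M : Set (F × F))

/-!
A finitely generated `O_F`-submodule of `F` is cyclic, so a lattice stable under `O_F × O_F` is
a product `O_F u × O_F w`: it is cut out by `v x ≤ v u`, `v y ≤ v w`. Because `π` is
irreducible, no value of `v` lies strictly between `v π` and `1`; hence each factor of a stable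
lattice squeezed between `π M` and `M = O_F u × O_F w` is `O_F u` or `O_F π u` (resp. for `w`).
Of the four products, `M` and `π M` are excluded by strictness and the other two are
`(π, 1) M` and `(1, π) M`. These two and `M` lie in distinct classes, because
`v (a b') = v (a' b)` whenever `O_F a × O_F b` and `O_F a' × O_F b'` are homothetic.
-/

section

open Submodule hiding IsLattice

variable {K : Type*} [Field K] [Valued K ℤᵐ⁰]

theorem not_isUnit_iff_valuation_lt_one (a : OF K) : ¬IsUnit a ↔ Valued.v (a : K) < 1 := by
  rw [← mem_nonunits_iff, ← IsLocalRing.mem_maximalIdeal, Valuation.mem_maximalIdeal_iff]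

theorem mem_span_singleton_iff_valuation_le {x y : K} :
    x ∈ span (OF K) {y} ↔ Valued.v x ≤ Valued.v y := by
  rw [mem_span_singleton]
  rcases eq_or_ne y 0 with rfl | hy
  · simp [eq_comm (a := (0 : K))]
  have hy' : 0 < Valued.v y := (Valuation.pos_iff _).2 hy
  constructor
  · rintro ⟨a, rfl⟩
    calc Valued.v ((a : K) * y) = Valued.v (a : K) * Valued.v y := map_mul _ _ _
      _ ≤ 1 * Valued.v y := mul_le_mul_left a.2 _
      _ = Valued.v y := one_mul _
  · intro h
    refine ⟨⟨x / y, ?_⟩, ?_⟩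
    · rw [Valuation.mem_valuationSubring_iff, map_div₀, div_le_one₀ hy']
      exact h
    · change x / y * y = x
      field_simp

theorem valuation_lt_one_of_irreducible {π : OF K} (hπ : Irreducible π) :
    Valued.v (π : K) < 1 :=
  (not_isUnit_iff_valuation_lt_one π).1 hπ.not_isUnit

/-- Otherwise `π = (y / x) * (π x / y)` would factor `π` into two non-units. -/
theorem valuation_le_valuation_mul_of_lt {π : OF K} (hπ : Irreducible π) {x y : K}
    (h : Valued.v y < Valued.v x) : Valued.v y ≤ Valued.v ((π : K) * x) := by
  by_contra! hlt
  have hx : 0 < Valued.v x := zero_le.trans_lt h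
  have hy : 0 < Valued.v y := zero_le.trans_lt hlt
  let a : OF K := ⟨y / x, by
    rw [Valuation.mem_valuationSubring_iff, map_div₀, div_le_one₀ hx]; exact h.le⟩
  let b : OF K := ⟨π * x / y, by
    rw [Valuation.mem_valuationSubring_iff, map_div₀, div_le_one₀ hy]; exact hlt.le⟩
  have hab : π = a * b := Subtype.ext <| by
    change (π : K) = y / x * (π * x / y)
    field_simp [(Valuation.pos_iff _).1 hx, (Valuation.pos_iff _).1 hy]
  rcases hπ.isUnit_or_isUnit hab with ha | hb
  · exact (not_isUnit_iff_valuation_lt_one a).2 (by simpa [a, map_div₀, div_lt_one₀ hx]) ha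
  · refine (not_isUnit_iff_valuation_lt_one b).2 ?_ hb
    change Valued.v (π * x / y) < 1
    rwa [map_div₀, div_lt_one₀ hy]

theorem valuation_mul_lt_of_irreducible {π : OF K} (hπ : Irreducible π) {x : K} (hx : x ≠ 0) :
    Valued.v ((π : K) * x) < Valued.v x := by
  rw [map_mul]
  exact mul_lt_of_lt_one_left ((Valuation.pos_iff _).2 hx) (valuation_lt_one_of_irreducible hπ)

theorem eq_span_singleton_or_eq_span_singleton_mul {π : OF K} (hπ : Irreducible π)
    {N : Submodule (OF K) K} {x : K} (hle : N ≤ span (OF K) {x}) (hmem : (π : K) * x ∈ N) :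
    N = span (OF K) {x} ∨ N = span (OF K) {(π : K) * x} := by
  by_cases hx : x ∈ N
  · exact Or.inl (le_antisymm hle ((span_singleton_le_iff_mem _ _).2 hx))
  refine Or.inr (le_antisymm (fun y hy => ?_) ((span_singleton_le_iff_mem _ _).2 hmem))
  have hyx := mem_span_singleton_iff_valuation_le.1 (hle hy)
  have hlt : Valued.v y < Valued.v x := hyx.lt_of_ne fun heq =>
    hx ((span_singleton_le_iff_mem _ _).2 hy (mem_span_singleton_iff_valuation_le.2 heq.ge))
  exact mem_span_singleton_iff_valuation_le.2 (valuation_le_valuation_mul_of_lt hπ hlt)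

theorem Submodule.FG.exists_eq_span_singleton {N : Submodule (OF K) K} (hN : N.FG) :
    ∃ u : K, N = span (OF K) {u} := by
  obtain ⟨S, rfl⟩ := hN
  rcases S.eq_empty_or_nonempty with rfl | hS
  · exact ⟨0, by simp⟩
  obtain ⟨m, hm, hmax⟩ := S.exists_max_image Valued.v hS
  refine ⟨m, le_antisymm (span_le.2 fun s hs => ?_) (span_mono (by simpa using hm))⟩
  exact mem_span_singleton_iff_valuation_le.2 (hmax s hs)

def diagonalLattice (a b : K) : Submodule (OF K) (K × K) :=
  (span (OF K) {a}).prod (span (OF K) {b})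

theorem coe_diagonalLattice (a b : K) :
    (diagonalLattice a b : Set (K × K)) =
      (span (OF K) {a} : Set K) ×ˢ (span (OF K) {b} : Set K) :=
  rfl

theorem smul_coe_span_singleton (c a : K) :
    c • (span (OF K) {a} : Set K) = span (OF K) {c * a} := by
  rw [← coe_pointwise_smul, smul_span, Set.smul_set_singleton, smul_eq_mul]

theorem smul_coe_diagonalLattice (c a b : K) :
    c • (diagonalLattice a b : Set (K × K)) = diagonalLattice (c * a) (c * b) := by
  rw [coe_diagonalLattice, Set.smul_set_prod, smul_coe_span_singleton, smul_coe_span_singleton]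
  rfl

theorem pair_smul_coe_diagonalLattice (c d a b : K) :
    ((c, d) : K × K) • (diagonalLattice a b : Set (K × K)) = diagonalLattice (c * a) (d * b) := by
  rw [coe_diagonalLattice, coe_diagonalLattice, ← smul_coe_span_singleton,
    ← smul_coe_span_singleton]
  exact Set.prodMap_image_prod _ _ _ _

theorem diagonalLattice_le_diagonalLattice_iff {a b a' b' : K} :
    diagonalLattice a b ≤ diagonalLattice a' b' ↔
      Valued.v a ≤ Valued.v a' ∧ Valued.v b ≤ Valued.v b' := by
  rw [← mem_span_singleton_iff_valuation_le, ← mem_span_singleton_iff_valuation_le]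
  refine ⟨fun h => ⟨?_, ?_⟩, fun ⟨ha, hb⟩ => ?_⟩
  · exact (h (show ((a, 0) : K × K) ∈ diagonalLattice a b from
      ⟨mem_span_singleton_self a, zero_mem _⟩)).1
  · exact (h (show ((0, b) : K × K) ∈ diagonalLattice a b from
      ⟨zero_mem _, mem_span_singleton_self b⟩)).2
  · exact prod_mono ((span_singleton_le_iff_mem _ _).2 ha)
      ((span_singleton_le_iff_mem _ _).2 hb)

theorem diagonalLattice_eq_diagonalLattice_iff {a b a' b' : K} :
    diagonalLattice a b = diagonalLattice a' b' ↔
      Valued.v a = Valued.v a' ∧ Valued.v b = Valued.v b' := by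
  simp only [le_antisymm_iff, diagonalLattice_le_diagonalLattice_iff]
  tauto

theorem coe_diagonalLattice_ssubset {a b a' b' : K} (ha : Valued.v a ≤ Valued.v a')
    (hb : Valued.v b ≤ Valued.v b') (hlt : Valued.v a < Valued.v a' ∨ Valued.v b < Valued.v b') :
    (diagonalLattice a b : Set (K × K)) ⊂ diagonalLattice a' b' := by
  refine SetLike.coe_ssubset_coe.2 (lt_of_le_not_ge
    (diagonalLattice_le_diagonalLattice_iff.2 ⟨ha, hb⟩) fun h => ?_)
  obtain ⟨ha', hb'⟩ := diagonalLattice_le_diagonalLattice_iff.1 h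
  rcases hlt with hlt | hlt
  exacts [hlt.not_ge ha', hlt.not_ge hb']

theorem isLattice_diagonalLattice {a b : K} (ha : a ≠ 0) (hb : b ≠ 0) :
    IsLattice K (diagonalLattice a b) := by
  refine ⟨(fg_span_singleton a).prod (fg_span_singleton b), eq_top_iff.2 ?_⟩
  rintro ⟨x, y⟩ -
  have hxy : ((x, y) : K × K) = (x / a) • ((a, 0) : K × K) + (y / b) • ((0, b) : K × K) := by
    ext <;> simp [ha, hb]
  rw [hxy]
  exact add_mem (smul_mem _ _ (subset_span ⟨mem_span_singleton_self a, zero_mem _⟩))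
    (smul_mem _ _ (subset_span ⟨zero_mem _, mem_span_singleton_self b⟩))

theorem stable_diagonalLattice (a b : K) : Stable K (diagonalLattice a b) :=
  fun c d _ ⟨hx, hy⟩ => ⟨smul_mem _ c hx, smul_mem _ d hy⟩

theorem Stable.eq_prod_map {L : Submodule (OF K) (K × K)} (hL : Stable K L) :
    L = (L.map (LinearMap.fst (OF K) K K)).prod (L.map (LinearMap.snd (OF K) K K)) := by
  refine le_antisymm (fun p hp => ⟨mem_map_of_mem hp, mem_map_of_mem hp⟩) ?_
  rintro ⟨x, y⟩ ⟨⟨p, hp, rfl⟩, ⟨q, hq, rfl⟩⟩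
  convert add_mem (hL 1 0 p hp) (hL 0 1 q hq) using 1
  ext <;> simp

theorem IsLattice.exists_mem_apply_ne_zero {L : Submodule (OF K) (K × K)} (hL : IsLattice K L)
    {f : K × K →ₗ[K] K} (hf : f ≠ 0) : ∃ p ∈ L, f p ≠ 0 := by
  by_contra! h
  refine hf (LinearMap.ker_eq_top.1 (top_le_iff.1 ?_))
  exact hL.2 ▸ span_le.2 fun p hp => LinearMap.mem_ker.2 (h p hp)

theorem Stable.exists_eq_diagonalLattice {L : Submodule (OF K) (K × K)} (hL : IsLattice K L)
    (hs : Stable K L) : ∃ u w : K, u ≠ 0 ∧ w ≠ 0 ∧ L = diagonalLattice u w := by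
  obtain ⟨u, hu⟩ := (hL.1.map (LinearMap.fst (OF K) K K)).exists_eq_span_singleton
  obtain ⟨w, hw⟩ := (hL.1.map (LinearMap.snd (OF K) K K)).exists_eq_span_singleton
  refine ⟨u, w, ?_, ?_, hs.eq_prod_map.trans (by rw [hu, hw]; rfl)⟩
  · rintro rfl
    obtain ⟨p, hp, hp0⟩ := hL.exists_mem_apply_ne_zero (f := LinearMap.fst K K K)
      fun h => one_ne_zero (LinearMap.congr_fun h (1, 0))
    have : p.1 ∈ span (OF K) {(0 : K)} := hu ▸ mem_map_of_mem hp
    exact hp0 (by simpa using this)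
  · rintro rfl
    obtain ⟨p, hp, hp0⟩ := hL.exists_mem_apply_ne_zero (f := LinearMap.snd K K K)
      fun h => one_ne_zero (LinearMap.congr_fun h (0, 1))
    have : p.2 ∈ span (OF K) {(0 : K)} := hw ▸ mem_map_of_mem hp
    exact hp0 (by simpa using this)

theorem Homothetic.refl (L : Submodule (OF K) (K × K)) : Homothetic K L L :=
  ⟨1, one_ne_zero, (one_smul K _).symm⟩

theorem Homothetic.symm {L L' : Submodule (OF K) (K × K)} (h : Homothetic K L L') :
    Homothetic K L' L := by
  obtain ⟨c, hc, h⟩ := h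
  exact ⟨c⁻¹, inv_ne_zero hc, by rw [h, inv_smul_smul₀ hc]⟩

theorem Homothetic.trans {L L' L'' : Submodule (OF K) (K × K)} (h : Homothetic K L L')
    (h' : Homothetic K L' L'') : Homothetic K L L'' := by
  obtain ⟨c, hc, h⟩ := h
  obtain ⟨c', hc', h'⟩ := h'
  exact ⟨c' * c, mul_ne_zero hc' hc, by rw [h', h, smul_smul]⟩

theorem Stable.of_homothetic {L L' : Submodule (OF K) (K × K)} (hL : Stable K L)
    (h : Homothetic K L L') : Stable K L' := by
  obtain ⟨c, -, h⟩ := h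
  intro a b x hx
  rw [← SetLike.mem_coe, h] at hx ⊢
  obtain ⟨y, hy, rfl⟩ := hx
  exact ⟨_, hL a b y hy, (mul_smul_comm _ _ _).symm⟩

theorem homothetic_diagonalLattice_mul {c : K} (hc : c ≠ 0) (a b : K) :
    Homothetic K (diagonalLattice a b) (diagonalLattice (c * a) (c * b)) :=
  ⟨c, hc, (smul_coe_diagonalLattice c a b).symm⟩

theorem Homothetic.valuation_mul_eq {a b a' b' : K}
    (h : Homothetic K (diagonalLattice a b) (diagonalLattice a' b')) :
    Valued.v (a * b') = Valued.v (a' * b) := by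
  obtain ⟨c, -, h⟩ := h
  rw [smul_coe_diagonalLattice, SetLike.coe_set_eq, diagonalLattice_eq_diagonalLattice_iff] at h
  rw [map_mul, map_mul, h.1, h.2, map_mul, map_mul]
  ac_rfl

theorem adjacent_diagonalLattice_mul_left {π : OF K} (hπ : Irreducible π) {a b : K}
    (ha : a ≠ 0) (hb : b ≠ 0) :
    Adjacent K π (diagonalLattice a b) (diagonalLattice (π * a) b) := by
  have hπa := valuation_mul_lt_of_irreducible hπ ha
  have hπb := valuation_mul_lt_of_irreducible hπ hb
  refine ⟨fun h => ?_, _, _, .refl _, .refl _, ?_, ?_⟩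
  · have h := h.valuation_mul_eq
    rw [mul_assoc] at h
    exact (valuation_mul_lt_of_irreducible hπ (mul_ne_zero ha hb)).ne h.symm
  · rw [smul_coe_diagonalLattice]
    exact coe_diagonalLattice_ssubset le_rfl hπb.le (Or.inr hπb)
  · exact coe_diagonalLattice_ssubset hπa.le le_rfl (Or.inl hπa)

theorem adjacent_diagonalLattice_mul_right {π : OF K} (hπ : Irreducible π) {a b : K}
    (ha : a ≠ 0) (hb : b ≠ 0) :
    Adjacent K π (diagonalLattice a b) (diagonalLattice a (π * b)) := by
  have hπa := valuation_mul_lt_of_irreducible hπ ha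
  have hπb := valuation_mul_lt_of_irreducible hπ hb
  refine ⟨fun h => ?_, _, _, .refl _, .refl _, ?_, ?_⟩
  · have h := h.valuation_mul_eq
    rw [mul_left_comm] at h
    exact (valuation_mul_lt_of_irreducible hπ (mul_ne_zero ha hb)).ne h
  · rw [smul_coe_diagonalLattice]
    exact coe_diagonalLattice_ssubset hπa.le le_rfl (Or.inl hπa)
  · exact coe_diagonalLattice_ssubset le_rfl hπb.le (Or.inr hπb)

theorem not_homothetic_diagonalLattice_mul_left_mul_right {π : OF K} (hπ : Irreducible π) {a b : K}
    (ha : a ≠ 0) (hb : b ≠ 0) :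
    ¬Homothetic K (diagonalLattice (π * a) b) (diagonalLattice a (π * b)) := by
  intro h
  have h := h.valuation_mul_eq
  rw [show (π : K) * a * (π * b) = π * (π * (a * b)) by ring] at h
  have hab := mul_ne_zero ha hb
  exact ((valuation_mul_lt_of_irreducible hπ (mul_ne_zero (by simpa using hπ.ne_zero) hab)).trans
    (valuation_mul_lt_of_irreducible hπ hab)).ne h

theorem Stable.eq_diagonalLattice_of_le {π : OF K} (hπ : Irreducible π)
    {N : Submodule (OF K) (K × K)} (hN : Stable K N) {x y : K}
    (hlow : diagonalLattice (π * x) (π * y) ≤ N) (hup : N ≤ diagonalLattice x y) :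
    N = diagonalLattice x y ∨ N = diagonalLattice (π * x) y ∨
      N = diagonalLattice x (π * y) ∨ N = diagonalLattice (π * x) (π * y) := by
  have hfst := eq_span_singleton_or_eq_span_singleton_mul hπ
    (N := N.map (LinearMap.fst (OF K) K K)) (map_le_iff_le_comap.2 fun p hp => (hup hp).1)
    ⟨(π * x, 0), hlow ⟨mem_span_singleton_self _, zero_mem _⟩, rfl⟩
  have hsnd := eq_span_singleton_or_eq_span_singleton_mul hπ
    (N := N.map (LinearMap.snd (OF K) K K)) (map_le_iff_le_comap.2 fun p hp => (hup hp).2)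
    ⟨(0, π * y), hlow ⟨zero_mem _, mem_span_singleton_self _⟩, rfl⟩
  have hprod := hN.eq_prod_map
  rcases hfst with h₁ | h₁ <;> rcases hsnd with h₂ | h₂ <;> rw [h₁, h₂] at hprod
  exacts [Or.inl hprod, Or.inr (Or.inr (Or.inl hprod)), Or.inr (Or.inl hprod),
    Or.inr (Or.inr (Or.inr hprod))]

theorem Adjacent.homothetic_of_homothetic_stable {π : OF K} (hπ : Irreducible π) {u w : K}
    {L' M : Submodule (OF K) (K × K)} (hadj : Adjacent K π (diagonalLattice u w) L')
    (hM : Homothetic K L' M) (hMs : Stable K M) :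
    Homothetic K L' (diagonalLattice (π * u) w) ∨ Homothetic K L' (diagonalLattice u (π * w)) := by
  obtain ⟨-, M₁, M₂, ⟨c, hc, hM₁⟩, hM₂, hlow, hup⟩ := hadj
  rw [smul_coe_diagonalLattice] at hM₁
  rw [hM₁, smul_coe_diagonalLattice] at hlow
  rw [hM₁] at hup
  rcases (hMs.of_homothetic (hM.symm.trans hM₂)).eq_diagonalLattice_of_le hπ
      (SetLike.coe_subset_coe.1 hlow.subset) (SetLike.coe_subset_coe.1 hup.subset)
    with h | h | h | h <;> rw [h] at hlow hup hM₂
  · exact absurd rfl hup.ne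
  · rw [mul_left_comm] at hM₂
    exact Or.inl (hM₂.trans (homothetic_diagonalLattice_mul hc _ _).symm)
  · rw [mul_left_comm _ c] at hM₂
    exact Or.inr (hM₂.trans (homothetic_diagonalLattice_mul hc _ _).symm)
  · exact absurd rfl hlow.ne

end

theorem adjacent_stable_classes_split_case
    (π : OF F) (hπ : Irreducible π)
    (L : Submodule (OF F) (F × F)) (hL : IsLattice F L) (hstab : Stable F L) :
    ∃ L₁ L₂ : Submodule (OF F) (F × F),
      IsLattice F L₁ ∧ (L₁ : Set (F × F)) = ((((π : F), 1) : F × F)) • (L : Set (F × F)) ∧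
      IsLattice F L₂ ∧ (L₂ : Set (F × F)) = (((1, (π : F)) : F × F)) • (L : Set (F × F)) ∧
      Adjacent F π L L₁ ∧ Stable F L₁ ∧
      Adjacent F π L L₂ ∧ Stable F L₂ ∧
      ¬ Homothetic F L₁ L₂ ∧
      (∀ L' : Submodule (OF F) (F × F), IsLattice F L' → Adjacent F π L L' →
        (∃ M : Submodule (OF F) (F × F), Homothetic F L' M ∧ Stable F M) →
        (Homothetic F L' L₁ ∨ Homothetic F L' L₂)) := by
  obtain ⟨u, w, hu, hw, rfl⟩ := hstab.exists_eq_diagonalLattice hL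
  have hπ₀ : (π : F) ≠ 0 := by simpa using hπ.ne_zero
  refine ⟨diagonalLattice (π * u) w, diagonalLattice u (π * w),
    isLattice_diagonalLattice (mul_ne_zero hπ₀ hu) hw,
    by rw [pair_smul_coe_diagonalLattice, one_mul],
    isLattice_diagonalLattice hu (mul_ne_zero hπ₀ hw),
    by rw [pair_smul_coe_diagonalLattice, one_mul],
    adjacent_diagonalLattice_mul_left hπ hu hw, stable_diagonalLattice _ _,
    adjacent_diagonalLattice_mul_right hπ hu hw, stable_diagonalLattice _ _,
    not_homothetic_diagonalLattice_mul_left_mul_right hπ hu hw,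
    fun L' _ hadj ⟨M, hM, hMs⟩ => hadj.homothetic_of_homothetic_stable hπ hM hMs⟩
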